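/- Let (X_n) be i.i.d. under each P in a family 𝒫 with 1 < q < 2, Y := X − E_P X, and suppose lim_{m→∞} sup_{P∈𝒫} E_P(|Y|^q 1{|Y|^q > m}) = 0. Then with Z_n := Y_n/n^{1/q} and Z_n^{≤1} := Z_n·1{|Z_n| ≤ 1}: lim_{m→∞} sup_{P∈𝒫} Σ_{n=m}^∞ |E_P Z_n^{≤1}| = 0, lim_{m→∞} sup_{P∈𝒫} Σ_{n=m}^∞ Var_P Z_n^{≤1} = 0, and lim_{m→∞} sup_{P∈𝒫} Σ_{n=m}^∞ P(|Y| > n^{1/q}) = 0. -/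

import Mathlib

/-!
Write `W = |Y|^q` for the centred variable `Y`, so that `Z_n = Y / n^{1/q}` has `|Z_n| > 1` iff
`W > n`. Because `E Y = 0`, `|E Z_n^{≤1}| = |E[Z_n; |Z_n| > 1]| ≤ E[(W/n)^{1/q}; n < W]`; also
`Var Z_n^{≤1} ≤ E[(W/n)^{2/q}; W ≤ n]` and `P(|Y| > n^{1/q}) = P(W > n)`. Summing over `n ≥ m`
under the expectation and telescoping `n^{1-s}` gives, pointwise in `W`,
`∑_{m ≤ n < W} (W/n)^{1/q} ≤ q/(q-1) · W 1{W > m}`, `#{n : m ≤ n < W} ≤ W 1{W > m}` and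
`∑_{n ≥ m, n ≥ W} (W/n)^{2/q} ≤ 2/(2-q) · (W 1{W > M} + M^{2/q} m^{1-2/q})` for `M ≤ m`.
So every tail is bounded by a multiple of `E[W; W > M]`, which is small uniformly in `P`, plus a
term that does not depend on `P` and vanishes as `m → ∞`.
-/

open MeasureTheory ProbabilityTheory Filter Real Finset Topology
open scoped ENNReal

theorem one_sub_mul_rpow_neg_le_rpow_sub_rpow {s y : ℝ} (hs0 : 0 ≤ s) (hs1 : s ≤ 1)
    (hy : 1 ≤ y) : (1 - s) * y ^ (-s) ≤ y ^ (1 - s) - (y - 1) ^ (1 - s) := by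
  have hy0 : 0 < y := by linarith
  have hbern := rpow_one_add_le_one_add_mul_self (s := -y⁻¹)
    (by linarith [inv_le_one_of_one_le₀ hy]) (p := 1 - s) (by linarith) (by linarith)
  have hsplit : (y - 1) ^ (1 - s) = (1 + -y⁻¹) ^ (1 - s) * y ^ (1 - s) := by
    rw [← mul_rpow (by linarith [inv_le_one_of_one_le₀ hy]) hy0.le]
    congr 1
    field_simp
    ring
  have hneg : y ^ (-s) = y ^ (1 - s) * y⁻¹ := by
    rw [show -s = 1 - s - 1 by ring, rpow_sub_one hy0.ne', div_eq_mul_inv]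
  rw [hsplit, hneg]
  nlinarith [mul_le_mul_of_nonneg_right hbern (rpow_nonneg hy0.le (1 - s))]

theorem sub_one_mul_rpow_neg_le_rpow_sub_rpow {s y : ℝ} (hs : 1 ≤ s) (hy : 0 < y) :
    (s - 1) * (y + 1) ^ (-s) ≤ y ^ (1 - s) - (y + 1) ^ (1 - s) := by
  obtain ⟨c, hc, hslope⟩ := exists_hasDerivAt_eq_slope (fun t => t ^ (1 - s))
    (fun t => (1 - s) * t ^ (1 - s - 1)) (lt_add_one y)
    (fun t ht => (continuousAt_rpow_const t _ (Or.inl (hy.trans_le ht.1).ne')).continuousWithinAt)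
    (fun t ht => hasDerivAt_rpow_const (Or.inl (hy.trans ht.1).ne'))
  have hc_pow : (y + 1) ^ (-s) ≤ c ^ (-s) :=
    rpow_le_rpow_of_nonpos (hy.trans hc.1) hc.2.le (by linarith)
  simp only [add_sub_cancel_left, div_one, show 1 - s - 1 = -s by ring] at hslope
  nlinarith

theorem sum_range_rpow_neg_le {s : ℝ} (hs0 : 0 ≤ s) (hs1 : s < 1) (n K : ℕ) :
    ∑ k ∈ range K, ((n + k + 1 : ℕ) : ℝ) ^ (-s) ≤
      ((n + K : ℕ) : ℝ) ^ (1 - s) / (1 - s) := by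
  have hstep : ∀ k ∈ range K, ((n + k + 1 : ℕ) : ℝ) ^ (-s) ≤
      (((n + (k + 1) : ℕ) : ℝ) ^ (1 - s) - ((n + k : ℕ) : ℝ) ^ (1 - s)) / (1 - s) := by
    intro k _
    rw [le_div_iff₀ (by linarith), mul_comm]
    have h := one_sub_mul_rpow_neg_le_rpow_sub_rpow hs0 hs1.le
      (by norm_cast; omega : (1 : ℝ) ≤ ((n + k + 1 : ℕ) : ℝ))
    rwa [show ((n + k + 1 : ℕ) : ℝ) - 1 = ((n + k : ℕ) : ℝ) by push_cast; ring] at h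
  calc _ ≤ _ := sum_le_sum hstep
    _ = (((n + K : ℕ) : ℝ) ^ (1 - s) - ((n + 0 : ℕ) : ℝ) ^ (1 - s)) / (1 - s) := by
      rw [← sum_div, sum_range_sub (fun k => ((n + k : ℕ) : ℝ) ^ (1 - s))]
    _ ≤ _ := div_le_div_of_nonneg_right (sub_le_self _ (rpow_nonneg (Nat.cast_nonneg _) _))
      (by linarith)

theorem sum_range_rpow_neg_le_of_one_lt {s : ℝ} (hs : 1 < s) {N : ℕ} (hN : 1 ≤ N) (J : ℕ) :
    ∑ j ∈ range J, ((N + j : ℕ) : ℝ) ^ (-s) ≤ s / (s - 1) * (N : ℝ) ^ (1 - s) := by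
  have hN0 : (1 : ℝ) ≤ N := by exact_mod_cast hN
  have htail :
      ∑ j ∈ range J, ((N + (j + 1) : ℕ) : ℝ) ^ (-s) ≤ (N : ℝ) ^ (1 - s) / (s - 1) := by
    have hstep : ∀ j ∈ range J, ((N + (j + 1) : ℕ) : ℝ) ^ (-s) ≤
        (((N + j : ℕ) : ℝ) ^ (1 - s) - ((N + (j + 1) : ℕ) : ℝ) ^ (1 - s)) / (s - 1) := by
      intro j _
      rw [le_div_iff₀ (by linarith), mul_comm]
      have h := sub_one_mul_rpow_neg_le_rpow_sub_rpow hs.le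
        (by positivity : (0 : ℝ) < ((N + j : ℕ) : ℝ))
      rwa [show ((N + j : ℕ) : ℝ) + 1 = ((N + (j + 1) : ℕ) : ℝ) by push_cast; ring] at h
    calc _ ≤ _ := sum_le_sum hstep
      _ = (((N + 0 : ℕ) : ℝ) ^ (1 - s) - ((N + J : ℕ) : ℝ) ^ (1 - s)) / (s - 1) := by
        rw [← sum_div, sum_range_sub' (fun j => ((N + j : ℕ) : ℝ) ^ (1 - s))]
      _ ≤ _ := by
        rw [Nat.add_zero]
        exact div_le_div_of_nonneg_right (sub_le_self _ (rpow_nonneg (Nat.cast_nonneg _) _))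
          (by linarith)
  have hhead : (N : ℝ) ^ (-s) ≤ (N : ℝ) ^ (1 - s) :=
    rpow_le_rpow_of_exponent_le hN0 (by linarith)
  calc ∑ j ∈ range J, ((N + j : ℕ) : ℝ) ^ (-s)
      ≤ ∑ j ∈ range (J + 1), ((N + j : ℕ) : ℝ) ^ (-s) :=
        sum_le_sum_of_subset_of_nonneg (range_subset_range.2 J.le_succ) fun _ _ _ => by positivity
    _ ≤ (N : ℝ) ^ (1 - s) / (s - 1) + (N : ℝ) ^ (1 - s) := by
        rw [sum_range_succ']
        simpa using add_le_add htail hhead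
    _ = s / (s - 1) * (N : ℝ) ^ (1 - s) := by
        field_simp [show s - 1 ≠ 0 by linarith]
        ring

theorem div_rpow_eq_mul_rpow_neg {w : ℝ} (hw : 0 ≤ w) (n : ℕ) (s : ℝ) :
    (w / n) ^ s = w ^ s * (n : ℝ) ^ (-s) := by
  rw [div_rpow hw (Nat.cast_nonneg n), rpow_neg (Nat.cast_nonneg n), div_eq_mul_inv]

theorem tsum_ite_natCast_add_lt_eq_sum_range (g : ℕ → ℝ≥0∞) (m : ℕ) (w : ℝ) :
    ∑' k, (if ((m + k : ℕ) : ℝ) < w then g (m + k) else 0) =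
      ∑ k ∈ range (⌈w⌉₊ - m), g (m + k) := by
  have hcond : ∀ k, ((m + k : ℕ) : ℝ) < w ↔ k < ⌈w⌉₊ - m := fun k => by
    rw [← Nat.lt_ceil]; omega
  simp_rw [hcond]
  rw [tsum_eq_sum (s := range (⌈w⌉₊ - m)) fun k hk => if_neg (by simpa using hk)]
  exact sum_congr rfl fun k hk => if_pos (mem_range.1 hk)

theorem tsum_ite_le_natCast_add_eq_tsum (g : ℕ → ℝ≥0∞) (m : ℕ) (w : ℝ) :
    ∑' k, (if w ≤ ((m + k : ℕ) : ℝ) then g (m + k) else 0) =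
      ∑' j, g (max m ⌈w⌉₊ + j) := by
  have hcond : ∀ k, w ≤ ((m + k : ℕ) : ℝ) ↔ ⌈w⌉₊ - m ≤ k := fun k => by
    rw [← Nat.ceil_le]; omega
  simp_rw [hcond]
  rw [← ENNReal.summable.sum_add_tsum_nat_add' (k := ⌈w⌉₊ - m)
    (f := fun k => if ⌈w⌉₊ - m ≤ k then g (m + k) else 0),
    sum_eq_zero fun k hk => if_neg (not_le.2 (mem_range.1 hk)), zero_add]
  exact tsum_congr fun j => by rw [if_pos (by omega)]; congr 1; omega

theorem tsum_ite_natCast_add_lt_one_le {m : ℕ} (hm : 1 ≤ m) (w : ℝ) :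
    ∑' k, (if ((m + k : ℕ) : ℝ) < w then (1 : ℝ≥0∞) else 0) ≤
      ENNReal.ofReal (if (m : ℝ) < w then w else 0) := by
  rw [tsum_ite_natCast_add_lt_eq_sum_range (fun _ => 1), sum_const, card_range, nsmul_one]
  split_ifs with hw
  · rw [← ENNReal.ofReal_natCast]
    apply ENNReal.ofReal_le_ofReal
    have hceil := Nat.ceil_lt_add_one (hw.le.trans' (Nat.cast_nonneg m))
    have hK : ((⌈w⌉₊ - m : ℕ) : ℝ) + 1 ≤ ⌈w⌉₊ := by
      have := Nat.lt_ceil.2 hw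
      norm_cast
      omega
    linarith
  · simp [Nat.ceil_le.2 (not_lt.1 hw)]

theorem tsum_ite_lt_div_rpow_le {s : ℝ} (hs0 : 0 ≤ s) (hs1 : s < 1) {m : ℕ}
    (hm : 1 ≤ m) {w : ℝ} (hw : 0 ≤ w) :
    ∑' k, (if ((m + k : ℕ) : ℝ) < w then
        ENNReal.ofReal ((w / ((m + k : ℕ) : ℝ)) ^ s) else 0) ≤
      ENNReal.ofReal (1 / (1 - s)) * ENNReal.ofReal (if (m : ℝ) < w then w else 0) := by
  simp_rw [div_rpow_eq_mul_rpow_neg hw]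
  rw [tsum_ite_natCast_add_lt_eq_sum_range (fun n => ENNReal.ofReal (w ^ s * (n : ℝ) ^ (-s)))]
  split_ifs with hmw
  swap
  · simp [Nat.ceil_le.2 (not_lt.1 hmw)]
  obtain ⟨n, rfl⟩ : ∃ n, m = n + 1 := ⟨m - 1, by omega⟩
  set K := ⌈w⌉₊ - (n + 1)
  have hnK : ((n + K : ℕ) : ℝ) ≤ w := by
    have := Nat.lt_ceil.2 hmw
    have : ((n + K : ℕ) : ℝ) + 1 ≤ ⌈w⌉₊ := by norm_cast; omega
    linarith [Nat.ceil_lt_add_one hw]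
  rw [← ENNReal.ofReal_sum_of_nonneg fun _ _ => by positivity,
    ← ENNReal.ofReal_mul (by rw [one_div_nonneg]; linarith)]
  apply ENNReal.ofReal_le_ofReal
  calc ∑ k ∈ range K, w ^ s * ((n + 1 + k : ℕ) : ℝ) ^ (-s)
      = w ^ s * ∑ k ∈ range K, ((n + k + 1 : ℕ) : ℝ) ^ (-s) := by
        rw [mul_sum]; simp only [Nat.add_right_comm]
    _ ≤ w ^ s * (((n + K : ℕ) : ℝ) ^ (1 - s) / (1 - s)) := by
        gcongr; exact sum_range_rpow_neg_le hs0 hs1 n K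
    _ ≤ w ^ s * (w ^ (1 - s) / (1 - s)) := by gcongr
    _ = 1 / (1 - s) * w := by
        rw [mul_div_assoc', ← rpow_add' hw (by norm_num), add_sub_cancel, rpow_one]
        ring

theorem tsum_ite_le_div_rpow_le {s : ℝ} (hs : 1 < s) {M m : ℕ} (hM : 1 ≤ M)
    (hMm : M ≤ m) {w : ℝ} (hw : 0 ≤ w) :
    ∑' k, (if w ≤ ((m + k : ℕ) : ℝ) then
        ENNReal.ofReal ((w / ((m + k : ℕ) : ℝ)) ^ s) else 0) ≤
      ENNReal.ofReal (s / (s - 1)) * (ENNReal.ofReal (if (M : ℝ) < w then w else 0) +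
        ENNReal.ofReal ((M : ℝ) ^ s * (m : ℝ) ^ (1 - s))) := by
  simp_rw [div_rpow_eq_mul_rpow_neg hw]
  rw [tsum_ite_le_natCast_add_eq_tsum (fun n => ENNReal.ofReal (w ^ s * (n : ℝ) ^ (-s)))]
  set N := max m ⌈w⌉₊
  have hN : 1 ≤ N := hM.trans (hMm.trans (le_max_left _ _))
  have hmN : (m : ℝ) ≤ N := by exact_mod_cast le_max_left _ _
  have hwN : w ≤ N := (Nat.le_ceil w).trans (by exact_mod_cast le_max_right _ _)
  have hm0 : (0 : ℝ) < m := by exact_mod_cast hM.trans hMm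
  have hsplit : w ^ s * (N : ℝ) ^ (1 - s) ≤
      (if (M : ℝ) < w then w else 0) + (M : ℝ) ^ s * (m : ℝ) ^ (1 - s) := by
    split_ifs with hMw
    · have hw0 : 0 < w := (Nat.cast_nonneg M).trans_lt hMw
      calc w ^ s * (N : ℝ) ^ (1 - s) ≤ w ^ s * w ^ (1 - s) :=
            mul_le_mul_of_nonneg_left (rpow_le_rpow_of_nonpos hw0 hwN (by linarith))
              (by positivity)
        _ = w := by rw [← rpow_add hw0]; simp
        _ ≤ _ := le_add_of_nonneg_right (by positivity)
    · rw [zero_add]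
      exact mul_le_mul (rpow_le_rpow hw (not_lt.1 hMw) (by linarith))
        (rpow_le_rpow_of_nonpos hm0 hmN (by linarith)) (by positivity) (by positivity)
  calc ∑' j, ENNReal.ofReal (w ^ s * ((N + j : ℕ) : ℝ) ^ (-s))
      ≤ ENNReal.ofReal (w ^ s * (s / (s - 1) * (N : ℝ) ^ (1 - s))) := by
        refine ENNReal.summable.tsum_le_of_sum_range_le fun J => ?_
        rw [← ENNReal.ofReal_sum_of_nonneg fun _ _ => by positivity, ← mul_sum]
        gcongr
        exact sum_range_rpow_neg_le_of_one_lt hs hN J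
    _ = ENNReal.ofReal (s / (s - 1)) * ENNReal.ofReal (w ^ s * (N : ℝ) ^ (1 - s)) := by
        rw [← ENNReal.ofReal_mul (div_nonneg (by linarith) (by linarith))]
        ring_nf
    _ ≤ _ := by
        rw [← ENNReal.ofReal_add (by split_ifs <;> positivity) (by positivity)]
        gcongr

theorem abs_div_rpow_one_div {n : ℝ} (hn : 0 < n) {q : ℝ} (hq : q ≠ 0) (y : ℝ) :
    |y / n ^ (1 / q)| = (|y| ^ q / n) ^ (1 / q) := by
  rw [abs_div, abs_of_pos (rpow_pos_of_pos hn _), div_rpow (by positivity) hn.le, one_div,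
    rpow_rpow_inv (abs_nonneg y) hq]

theorem one_lt_abs_div_rpow_one_div_iff {n : ℝ} (hn : 0 < n) {q : ℝ} (hq : 0 < q) (y : ℝ) :
    1 < |y / n ^ (1 / q)| ↔ n < |y| ^ q := by
  rw [abs_div, abs_of_pos (rpow_pos_of_pos hn _), one_lt_div (rpow_pos_of_pos hn _), one_div,
    rpow_inv_lt_iff_of_pos hn.le (abs_nonneg y) hq]

theorem tsum_ite_one_lt_abs_div_rpow_le {q : ℝ} (hq : 1 < q) {m : ℕ} (hm : 1 ≤ m) (y : ℝ) :
    ∑' k, (if 1 < |y / ((m + k : ℕ) : ℝ) ^ (1 / q)| then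
        ENNReal.ofReal |y / ((m + k : ℕ) : ℝ) ^ (1 / q)| else 0) ≤
      ENNReal.ofReal (q / (q - 1)) *
        ENNReal.ofReal (if (m : ℝ) < |y| ^ q then |y| ^ q else 0) := by
  have hq0 : 0 < q := by linarith
  have hterm : ∀ k, (if 1 < |y / ((m + k : ℕ) : ℝ) ^ (1 / q)| then
      ENNReal.ofReal |y / ((m + k : ℕ) : ℝ) ^ (1 / q)| else 0) =
      if ((m + k : ℕ) : ℝ) < |y| ^ q then
        ENNReal.ofReal ((|y| ^ q / ((m + k : ℕ) : ℝ)) ^ (1 / q)) else 0 := fun k => by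
    have hn : (0 : ℝ) < ((m + k : ℕ) : ℝ) := by exact_mod_cast (by omega : 0 < m + k)
    simp only [one_lt_abs_div_rpow_one_div_iff hn hq0]
    rw [abs_div_rpow_one_div hn hq0.ne']
  rw [tsum_congr hterm]
  convert tsum_ite_lt_div_rpow_le (s := 1 / q) (by positivity)
    ((div_lt_one hq0).2 hq) hm (by positivity : 0 ≤ |y| ^ q) using 3
  field_simp

theorem tsum_ite_abs_div_rpow_le_one_le {q : ℝ} (hq1 : 1 < q) (hq2 : q < 2) {M m : ℕ}
    (hM : 1 ≤ M) (hMm : M ≤ m) (y : ℝ) :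
    ∑' k, (if |y / ((m + k : ℕ) : ℝ) ^ (1 / q)| ≤ 1 then
        ENNReal.ofReal ((y / ((m + k : ℕ) : ℝ) ^ (1 / q)) ^ 2) else 0) ≤
      ENNReal.ofReal (2 / (2 - q)) *
        (ENNReal.ofReal (if (M : ℝ) < |y| ^ q then |y| ^ q else 0) +
          ENNReal.ofReal ((M : ℝ) ^ (2 / q) * (m : ℝ) ^ (1 - 2 / q))) := by
  have hq0 : 0 < q := by linarith
  have hterm : ∀ k, (if |y / ((m + k : ℕ) : ℝ) ^ (1 / q)| ≤ 1 then
      ENNReal.ofReal ((y / ((m + k : ℕ) : ℝ) ^ (1 / q)) ^ 2) else 0) =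
      if |y| ^ q ≤ ((m + k : ℕ) : ℝ) then
        ENNReal.ofReal ((|y| ^ q / ((m + k : ℕ) : ℝ)) ^ (2 / q)) else 0 := fun k => by
    have hn : (0 : ℝ) < ((m + k : ℕ) : ℝ) := by exact_mod_cast (by omega : 0 < m + k)
    have hsq : (y / ((m + k : ℕ) : ℝ) ^ (1 / q)) ^ 2 =
        (|y| ^ q / ((m + k : ℕ) : ℝ)) ^ (2 / q) := by
      rw [← sq_abs, abs_div_rpow_one_div hn hq0.ne', ← rpow_two, ← rpow_mul (by positivity),
        one_div_mul_eq_div]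
    simp only [← not_lt, one_lt_abs_div_rpow_one_div_iff hn hq0, hsq]
  rw [tsum_congr hterm]
  convert tsum_ite_le_div_rpow_le (s := 2 / q) ((one_lt_div hq0).2 hq2) hM hMm
    (by positivity : 0 ≤ |y| ^ q) using 3
  field_simp

theorem tsum_ite_rpow_lt_abs_le {q : ℝ} (hq : 0 < q) {m : ℕ} (hm : 1 ≤ m) (y : ℝ) :
    ∑' k, (if ((m + k : ℕ) : ℝ) ^ (1 / q) < |y| then (1 : ℝ≥0∞) else 0) ≤
      ENNReal.ofReal (if (m : ℝ) < |y| ^ q then |y| ^ q else 0) := by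
  simp_rw [one_div, rpow_inv_lt_iff_of_pos (Nat.cast_nonneg _) (abs_nonneg y) hq]
  exact tsum_ite_natCast_add_lt_one_le hm _

-- The truncation `Z ↦ Z^{≤1} = Z · 1{|Z| ≤ 1}` of the statement.
noncomputable def truncUnit (z : ℝ) : ℝ := if |z| ≤ 1 then z else 0

theorem measurable_truncUnit : Measurable truncUnit :=
  Measurable.ite (measurableSet_le measurable_abs measurable_const) measurable_id measurable_const

theorem abs_truncUnit_le (z : ℝ) : |truncUnit z| ≤ |z| := by
  unfold truncUnit; split_ifs <;> simp

section

variable {Ω : Type*} [MeasurableSpace Ω] {P : Measure Ω}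

theorem ofReal_abs_integral_truncUnit_le [IsFiniteMeasure P] {Z : Ω → ℝ} (hZ : Integrable Z P)
    (hZ0 : ∫ ω, Z ω ∂P = 0) :
    ENNReal.ofReal |∫ ω, truncUnit (Z ω) ∂P| ≤
      ∫⁻ ω, (if 1 < |Z ω| then ENNReal.ofReal |Z ω| else 0) ∂P := by
  have htrunc : Integrable (fun ω => truncUnit (Z ω)) P :=
    hZ.mono (measurable_truncUnit.comp_aemeasurable hZ.aemeasurable).aestronglyMeasurable
      (ae_of_all _ fun ω => abs_truncUnit_le (Z ω))
  have hcentred : ∫ ω, truncUnit (Z ω) ∂P = -∫ ω, (Z ω - truncUnit (Z ω)) ∂P := by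
    rw [integral_sub hZ htrunc, hZ0, zero_sub, neg_neg]
  rw [hcentred, abs_neg, ← enorm_eq_ofReal_abs]
  refine (enorm_integral_le_lintegral_enorm _).trans (lintegral_mono fun ω => ?_)
  unfold truncUnit
  by_cases h : 1 < |Z ω|
  · rw [if_pos h, if_neg (not_le.2 h), sub_zero, enorm_eq_ofReal_abs]
  · rw [if_neg h, if_pos (not_lt.1 h), sub_self, enorm_zero]

theorem ofReal_variance_truncUnit_le [IsProbabilityMeasure P] {Z : Ω → ℝ}
    (hZ : AEMeasurable Z P) :
    ENNReal.ofReal (variance (fun ω => truncUnit (Z ω)) P) ≤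
      ∫⁻ ω, (if |Z ω| ≤ 1 then ENNReal.ofReal (Z ω ^ 2) else 0) ∂P := by
  calc ENNReal.ofReal (variance (fun ω => truncUnit (Z ω)) P)
      ≤ ENNReal.ofReal |∫ ω, truncUnit (Z ω) ^ 2 ∂P| :=
        ENNReal.ofReal_le_ofReal ((variance_le_expectation_sq
          (measurable_truncUnit.comp_aemeasurable hZ).aestronglyMeasurable).trans (le_abs_self _))
    _ ≤ ∫⁻ ω, ‖truncUnit (Z ω) ^ 2‖ₑ ∂P := by
        rw [← enorm_eq_ofReal_abs]; exact enorm_integral_le_lintegral_enorm _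
    _ = _ := by
        refine lintegral_congr fun ω => ?_
        unfold truncUnit
        split_ifs
        · rw [enorm_eq_ofReal_abs, abs_pow, sq_abs]
        · simp

theorem lintegral_ofReal_ite_lt {W : Ω → ℝ} (hW : Integrable W P) (hWm : Measurable W)
    (hW0 : ∀ ω, 0 ≤ W ω) {a : ℝ} :
    ∫⁻ ω, ENNReal.ofReal (if a < W ω then W ω else 0) ∂P =
      ENNReal.ofReal (∫ ω in {ω | a < W ω}, W ω ∂P) := by
  have hs : MeasurableSet {ω | a < W ω} := measurableSet_lt measurable_const hWm
  rw [← integral_indicator hs, ofReal_integral_eq_lintegral_ofReal (hW.indicator hs)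
    (ae_of_all _ fun ω => Set.indicator_nonneg (fun ω _ => hW0 ω) ω)]
  exact lintegral_congr fun ω => by simp only [Set.indicator_apply, Set.mem_ofPred_eq]

variable {Y : ℕ → Ω → ℝ} {q : ℝ} {m : ℕ}

theorem tsum_ofReal_abs_integral_truncUnit_le [IsFiniteMeasure P]
    (hY : ∀ n, IdentDistrib (Y n) (Y 0) P P) (hY0 : Measurable (Y 0))
    (hint : Integrable (Y 0) P) (hmean : ∫ ω, Y 0 ω ∂P = 0)
    (hmom : Integrable (fun ω => |Y 0 ω| ^ q) P) (hq : 1 < q) (hm : 1 ≤ m) :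
    ∑' k, ENNReal.ofReal
        |∫ ω, truncUnit (Y (m + k) ω / ((m + k : ℕ) : ℝ) ^ (1 / q)) ∂P| ≤
      ENNReal.ofReal (q / (q - 1)) *
        ENNReal.ofReal (∫ ω in {ω | (m : ℝ) < |Y 0 ω| ^ q}, |Y 0 ω| ^ q ∂P) := by
  calc _ = ∑' k, ENNReal.ofReal
          |∫ ω, truncUnit (Y 0 ω / ((m + k : ℕ) : ℝ) ^ (1 / q)) ∂P| :=
        tsum_congr fun k => by
          congr 2
          exact ((hY (m + k)).comp
            (measurable_truncUnit.comp (measurable_id.div_const _))).integral_eq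
    _ ≤ ∑' k, ∫⁻ ω, (if 1 < |Y 0 ω / ((m + k : ℕ) : ℝ) ^ (1 / q)| then
          ENNReal.ofReal |Y 0 ω / ((m + k : ℕ) : ℝ) ^ (1 / q)| else 0) ∂P :=
        ENNReal.tsum_le_tsum fun k => ofReal_abs_integral_truncUnit_le (hint.div_const _)
          (by rw [integral_div, hmean, zero_div])
    _ = ∫⁻ ω, ∑' k, (if 1 < |Y 0 ω / ((m + k : ℕ) : ℝ) ^ (1 / q)| then
          ENNReal.ofReal |Y 0 ω / ((m + k : ℕ) : ℝ) ^ (1 / q)| else 0) ∂P :=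
        (lintegral_tsum fun k => (Measurable.ite (measurableSet_lt measurable_const
          (hY0.div_const _).abs) (hY0.div_const _).abs.ennreal_ofReal
          measurable_const).aemeasurable).symm
    _ ≤ ∫⁻ ω, ENNReal.ofReal (q / (q - 1)) *
          ENNReal.ofReal (if (m : ℝ) < |Y 0 ω| ^ q then |Y 0 ω| ^ q else 0) ∂P :=
        lintegral_mono fun ω => tsum_ite_one_lt_abs_div_rpow_le hq hm (Y 0 ω)
    _ = _ := by
        rw [lintegral_const_mul' _ _ ENNReal.ofReal_ne_top,
          lintegral_ofReal_ite_lt hmom (hY0.abs.pow_const q) fun ω => by positivity]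

theorem tsum_ofReal_variance_truncUnit_le [IsProbabilityMeasure P]
    (hY : ∀ n, IdentDistrib (Y n) (Y 0) P P) (hY0 : Measurable (Y 0))
    (hmom : Integrable (fun ω => |Y 0 ω| ^ q) P) (hq1 : 1 < q)
    (hq2 : q < 2) {M : ℕ} (hM : 1 ≤ M) (hMm : M ≤ m) :
    ∑' k, ENNReal.ofReal
        (variance (fun ω => truncUnit (Y (m + k) ω / ((m + k : ℕ) : ℝ) ^ (1 / q))) P) ≤
      ENNReal.ofReal (2 / (2 - q)) *
        (ENNReal.ofReal (∫ ω in {ω | (M : ℝ) < |Y 0 ω| ^ q}, |Y 0 ω| ^ q ∂P) +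
          ENNReal.ofReal ((M : ℝ) ^ (2 / q) * (m : ℝ) ^ (1 - 2 / q))) := by
  calc _ = ∑' k, ENNReal.ofReal
          (variance (fun ω => truncUnit (Y 0 ω / ((m + k : ℕ) : ℝ) ^ (1 / q))) P) :=
        tsum_congr fun k => by
          congr 1
          exact ((hY (m + k)).comp
            (measurable_truncUnit.comp (measurable_id.div_const _))).variance_eq
    _ ≤ ∑' k, ∫⁻ ω, (if |Y 0 ω / ((m + k : ℕ) : ℝ) ^ (1 / q)| ≤ 1 then
          ENNReal.ofReal ((Y 0 ω / ((m + k : ℕ) : ℝ) ^ (1 / q)) ^ 2) else 0) ∂P :=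
        ENNReal.tsum_le_tsum fun k =>
          ofReal_variance_truncUnit_le (hY0.div_const _).aemeasurable
    _ = ∫⁻ ω, ∑' k, (if |Y 0 ω / ((m + k : ℕ) : ℝ) ^ (1 / q)| ≤ 1 then
          ENNReal.ofReal ((Y 0 ω / ((m + k : ℕ) : ℝ) ^ (1 / q)) ^ 2) else 0) ∂P :=
        (lintegral_tsum fun k => (Measurable.ite (measurableSet_le (hY0.div_const _).abs
          measurable_const) ((hY0.div_const _).pow_const 2).ennreal_ofReal
          measurable_const).aemeasurable).symm
    _ ≤ ∫⁻ ω, ENNReal.ofReal (2 / (2 - q)) *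
          (ENNReal.ofReal (if (M : ℝ) < |Y 0 ω| ^ q then |Y 0 ω| ^ q else 0) +
            ENNReal.ofReal ((M : ℝ) ^ (2 / q) * (m : ℝ) ^ (1 - 2 / q))) ∂P :=
        lintegral_mono fun ω => tsum_ite_abs_div_rpow_le_one_le hq1 hq2 hM hMm (Y 0 ω)
    _ = _ := by
        rw [lintegral_const_mul' _ _ ENNReal.ofReal_ne_top,
          lintegral_add_right _ measurable_const, lintegral_const, measure_univ, mul_one,
          lintegral_ofReal_ite_lt hmom (hY0.abs.pow_const q) fun ω => by positivity]

theorem tsum_measure_rpow_lt_abs_le (hY : ∀ n, IdentDistrib (Y n) (Y 0) P P)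
    (hY0 : Measurable (Y 0)) (hmom : Integrable (fun ω => |Y 0 ω| ^ q) P) (hq : 0 < q)
    (hm : 1 ≤ m) :
    ∑' k, P {ω | ((m + k : ℕ) : ℝ) ^ (1 / q) < |Y (m + k) ω|} ≤
      ENNReal.ofReal (∫ ω in {ω | (m : ℝ) < |Y 0 ω| ^ q}, |Y 0 ω| ^ q ∂P) := by
  have hA : ∀ c : ℝ, MeasurableSet {ω | c < |Y 0 ω|} := fun c =>
    measurableSet_lt measurable_const hY0.abs
  calc _ = ∑' k, P {ω | ((m + k : ℕ) : ℝ) ^ (1 / q) < |Y 0 ω|} :=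
        tsum_congr fun k => (hY (m + k)).measure_mem_eq
          (measurableSet_lt measurable_const measurable_abs)
    _ = ∫⁻ ω, ∑' k, {ω | ((m + k : ℕ) : ℝ) ^ (1 / q) < |Y 0 ω|}.indicator 1 ω ∂P := by
        rw [lintegral_tsum fun k => (measurable_one.indicator (hA _)).aemeasurable]
        exact tsum_congr fun k => (lintegral_indicator_one (hA _)).symm
    _ ≤ ∫⁻ ω, ENNReal.ofReal (if (m : ℝ) < |Y 0 ω| ^ q then |Y 0 ω| ^ q else 0) ∂P :=
        lintegral_mono fun ω => by
          simpa only [Set.indicator_apply, Set.mem_ofPred_eq, Pi.one_apply] using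
            tsum_ite_rpow_lt_abs_le hq hm (Y 0 ω)
    _ = _ := lintegral_ofReal_ite_lt hmom (hY0.abs.pow_const q) fun ω => by positivity

end

theorem tendsto_const_mul_natCast_rpow_of_neg {e : ℝ} (he : e < 0) (a : ℝ) :
    Tendsto (fun m : ℕ => a * (m : ℝ) ^ e) atTop (𝓝 0) := by
  have h := (tendsto_rpow_neg_atTop (neg_pos.2 he)).comp tendsto_natCast_atTop_atTop
  simpa [Function.comp_def] using h.const_mul a

section

variable {ι : Type*} {I : Set ι} {s : ι → ℕ → ℝ≥0∞} {t : ι → ℕ → ℝ} {C : ℝ}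

theorem uniform_tendsto_zero_of_le_mul (hC : 0 ≤ C)
    (ht : ∀ ε : ℝ, 0 < ε → ∃ M : ℕ, ∀ m ≥ M, ∀ i ∈ I, t i m < ε)
    (hs : ∀ m ≥ 1, ∀ i ∈ I, s i m ≤ ENNReal.ofReal C * ENNReal.ofReal (t i m)) :
    ∀ ε : ℝ, 0 < ε → ∃ M : ℕ, ∀ m ≥ M, ∀ i ∈ I, s i m < ENNReal.ofReal ε := by
  intro ε hε
  obtain ⟨M, hM⟩ := ht (ε / (C + 1)) (by positivity)
  refine ⟨max M 1, fun m hm i hi => ?_⟩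
  calc s i m ≤ ENNReal.ofReal C * ENNReal.ofReal (t i m) := hs m (le_of_max_le_right hm) i hi
    _ ≤ ENNReal.ofReal C * ENNReal.ofReal (ε / (C + 1)) := by
        gcongr; exact (hM m (le_of_max_le_left hm) i hi).le
    _ = ENNReal.ofReal (C * (ε / (C + 1))) := (ENNReal.ofReal_mul hC).symm
    _ < ENNReal.ofReal ε := by
        rw [ENNReal.ofReal_lt_ofReal_iff hε, mul_div_assoc', div_lt_iff₀ (by linarith)]
        nlinarith

theorem uniform_tendsto_zero_of_le_mul_add {r : ℕ → ℕ → ℝ} (hC : 0 ≤ C)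
    (ht : ∀ ε : ℝ, 0 < ε → ∃ M : ℕ, ∀ m ≥ M, ∀ i ∈ I, t i m < ε)
    (hr : ∀ M, Tendsto (r M) atTop (𝓝 0))
    (hs : ∀ M ≥ 1, ∀ m ≥ M, ∀ i ∈ I,
      s i m ≤ ENNReal.ofReal C * (ENNReal.ofReal (t i M) + ENNReal.ofReal (r M m))) :
    ∀ ε : ℝ, 0 < ε → ∃ M : ℕ, ∀ m ≥ M, ∀ i ∈ I, s i m < ENNReal.ofReal ε := by
  intro ε hε
  set δ := ε / (2 * (C + 1))
  have hδ : 0 < δ := by positivity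
  obtain ⟨M₀, hM₀⟩ := ht δ hδ
  obtain ⟨M₁, hM₁⟩ := eventually_atTop.1 ((hr (max M₀ 1)).eventually (gt_mem_nhds hδ))
  refine ⟨max (max M₀ 1) M₁, fun m hm i hi => ?_⟩
  calc s i m ≤ ENNReal.ofReal C * (ENNReal.ofReal (t i (max M₀ 1)) +
        ENNReal.ofReal (r (max M₀ 1) m)) :=
        hs _ (le_max_right _ _) m (le_of_max_le_left hm) i hi
    _ ≤ ENNReal.ofReal C * (ENNReal.ofReal δ + ENNReal.ofReal δ) := by
        gcongr
        · exact (hM₀ _ (le_max_left _ _) i hi).le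
        · exact (hM₁ m (le_of_max_le_right hm)).le
    _ = ENNReal.ofReal (C * (δ + δ)) := by
        rw [ENNReal.ofReal_mul hC, ENNReal.ofReal_add hδ.le hδ.le]
    _ < ENNReal.ofReal ε := by
        rw [ENNReal.ofReal_lt_ofReal_iff hε, ← two_mul, mul_div_assoc', mul_div_assoc',
          div_lt_iff₀ (by linarith)]
        nlinarith

end

theorem stmt17_general {Ω : Type*} [MeasurableSpace Ω] (Ps : Set (Measure Ω))
    (hPs : ∀ P ∈ Ps, IsProbabilityMeasure P)
    (X : ℕ → Ω → ℝ) (hmeas : ∀ n, Measurable (X n))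
    (hiid : ∀ P ∈ Ps, ∀ n, IdentDistrib (X n) (X 0) P P)
    (q : ℝ) (hq1 : 1 < q) (hq2 : q < 2)
    (hint : ∀ P ∈ Ps, Integrable (X 0) P)
    (hmom : ∀ P ∈ Ps, Integrable (fun ω => |X 0 ω - ∫ x, X 0 x ∂P| ^ q) P)
    (hUI : ∀ ε : ℝ, 0 < ε → ∃ M : ℕ, ∀ m ≥ M, ∀ P ∈ Ps,
      ∫ ω in {ω | (m : ℝ) < |X 0 ω - ∫ x, X 0 x ∂P| ^ q},
        |X 0 ω - ∫ x, X 0 x ∂P| ^ q ∂P < ε) :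
    (∀ ε : ℝ, 0 < ε → ∃ M : ℕ, ∀ m ≥ M, ∀ P ∈ Ps,
      ∑' k : ℕ, ENNReal.ofReal
        |∫ ω, (if |(X (m + k) ω - ∫ x, X 0 x ∂P) / ((m + k : ℕ) : ℝ) ^ (1 / q)| ≤ 1 then
            (X (m + k) ω - ∫ x, X 0 x ∂P) / ((m + k : ℕ) : ℝ) ^ (1 / q) else 0) ∂P| <
        ENNReal.ofReal ε) ∧
    (∀ ε : ℝ, 0 < ε → ∃ M : ℕ, ∀ m ≥ M, ∀ P ∈ Ps,
      ∑' k : ℕ, ENNReal.ofReal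
        (variance (fun ω =>
          if |(X (m + k) ω - ∫ x, X 0 x ∂P) / ((m + k : ℕ) : ℝ) ^ (1 / q)| ≤ 1 then
            (X (m + k) ω - ∫ x, X 0 x ∂P) / ((m + k : ℕ) : ℝ) ^ (1 / q) else 0) P) <
        ENNReal.ofReal ε) ∧
    (∀ ε : ℝ, 0 < ε → ∃ M : ℕ, ∀ m ≥ M, ∀ P ∈ Ps,
      ∑' k : ℕ,
        P {ω | ((m + k : ℕ) : ℝ) ^ (1 / q) < |X (m + k) ω - ∫ x, X 0 x ∂P|} <
        ENNReal.ofReal ε) := by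
  have hq0 : 0 < q := by linarith
  have hY : ∀ P ∈ Ps, ∀ n, IdentDistrib (fun ω => X n ω - ∫ x, X 0 x ∂P)
      (fun ω => X 0 ω - ∫ x, X 0 x ∂P) P P :=
    fun P hP n => (hiid P hP n).comp (measurable_id.sub_const _)
  have hY0 : ∀ P : Measure Ω, Measurable fun ω => X 0 ω - ∫ x, X 0 x ∂P :=
    fun P => (hmeas 0).sub_const _
  have hmean : ∀ P ∈ Ps, ∫ ω, X 0 ω - ∫ x, X 0 x ∂P ∂P = 0 := fun P hP => by
    have := hPs P hP
    simp [integral_sub (hint P hP) (integrable_const _)]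
  refine ⟨uniform_tendsto_zero_of_le_mul (C := q / (q - 1)) (by bound) hUI
      fun m hm P hP => ?_,
    uniform_tendsto_zero_of_le_mul_add (C := 2 / (2 - q)) (by bound) hUI
      (fun M => tendsto_const_mul_natCast_rpow_of_neg (sub_neg.2 ((one_lt_div hq0).2 hq2))
        ((M : ℝ) ^ (2 / q)))
      fun M hM m hMm P hP => ?_,
    uniform_tendsto_zero_of_le_mul zero_le_one hUI fun m hm P hP => ?_⟩
  · have := hPs P hP
    exact tsum_ofReal_abs_integral_truncUnit_le (Y := fun n ω => X n ω - ∫ x, X 0 x ∂P)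
      (hY P hP) (hY0 P) ((hint P hP).sub (integrable_const _)) (hmean P hP) (hmom P hP) hq1 hm
  · have := hPs P hP
    exact tsum_ofReal_variance_truncUnit_le (hY P hP) (hY0 P) (hmom P hP) hq1 hq2 hM hMm
  · simpa only [ENNReal.ofReal_one, one_mul] using
      tsum_measure_rpow_lt_abs_le (hY P hP) (hY0 P) (hmom P hP) hq0 hm

/-- Sufficient conditions for the Ps-uniform Kolmogorov three-series theorem with `c = 1` in
the i.i.d. case with `1 < q < 2`: Ps-uniform integrability of the centered q-th moment implies
the three series for `Z_n := (X_n − E_P X)/n^{1/q}` have Ps-uniformly vanishing tails. -/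
theorem stmt17 {Ω : Type*} [MeasurableSpace Ω] (Ps : Set (Measure Ω))
    (hPs : ∀ P ∈ Ps, IsProbabilityMeasure P)
    (X : ℕ → Ω → ℝ) (hmeas : ∀ n, Measurable (X n))
    (hindep : ∀ P ∈ Ps, iIndepFun X P)
    (hiid : ∀ P ∈ Ps, ∀ n, IdentDistrib (X n) (X 0) P P)
    (q : ℝ) (hq1 : 1 < q) (hq2 : q < 2)
    (hint : ∀ P ∈ Ps, Integrable (X 0) P)
    (hmom : ∀ P ∈ Ps, Integrable (fun ω => |X 0 ω - ∫ x, X 0 x ∂P| ^ q) P)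
    (hUI : ∀ ε : ℝ, 0 < ε → ∃ M : ℕ, ∀ m ≥ M, ∀ P ∈ Ps,
      ∫ ω in {ω | (m : ℝ) < |X 0 ω - ∫ x, X 0 x ∂P| ^ q},
        |X 0 ω - ∫ x, X 0 x ∂P| ^ q ∂P < ε) :
    (∀ ε : ℝ, 0 < ε → ∃ M : ℕ, ∀ m ≥ M, ∀ P ∈ Ps,
      ∑' k : ℕ, ENNReal.ofReal
        |∫ ω, (if |(X (m + k) ω - ∫ x, X 0 x ∂P) / ((m + k : ℕ) : ℝ) ^ (1 / q)| ≤ 1 then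
            (X (m + k) ω - ∫ x, X 0 x ∂P) / ((m + k : ℕ) : ℝ) ^ (1 / q) else 0) ∂P| <
        ENNReal.ofReal ε) ∧
    (∀ ε : ℝ, 0 < ε → ∃ M : ℕ, ∀ m ≥ M, ∀ P ∈ Ps,
      ∑' k : ℕ, ENNReal.ofReal
        (variance (fun ω =>
          if |(X (m + k) ω - ∫ x, X 0 x ∂P) / ((m + k : ℕ) : ℝ) ^ (1 / q)| ≤ 1 then
            (X (m + k) ω - ∫ x, X 0 x ∂P) / ((m + k : ℕ) : ℝ) ^ (1 / q) else 0) P) <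
        ENNReal.ofReal ε) ∧
    (∀ ε : ℝ, 0 < ε → ∃ M : ℕ, ∀ m ≥ M, ∀ P ∈ Ps,
      ∑' k : ℕ,
        P {ω | ((m + k : ℕ) : ℝ) ^ (1 / q) < |X (m + k) ω - ∫ x, X 0 x ∂P|} <
        ENNReal.ofReal ε) :=
  stmt17_general Ps hPs X hmeas hiid q hq1 hq2 hint hmom hUI
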